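/- Let f : ℂ → ℂ^N be holomorphic and nowhere vanishing. Then at every point of ℂ, ∂∂̄ ln |f|² = |P₊f|²/|f|². -/

import Mathlib

open Complex Matrix

/-- Wirtinger derivative ∂ = (∂/∂ζ₁ − i ∂/∂ζ₂)/2 of a map ℂ → ℂ. -/
noncomputable def wD (f : ℂ → ℂ) (z : ℂ) : ℂ :=
  (fderiv ℝ f z 1 - Complex.I * fderiv ℝ f z Complex.I) / 2

/-- Anti-Wirtinger derivative ∂̄ = (∂/∂ζ₁ + i ∂/∂ζ₂)/2 of a map ℂ → ℂ. -/
noncomputable def wDbar (f : ℂ → ℂ) (z : ℂ) : ℂ :=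
  (fderiv ℝ f z 1 + Complex.I * fderiv ℝ f z Complex.I) / 2

/-- Componentwise Wirtinger derivative for vector-valued maps. -/
noncomputable def wDV {N : ℕ} (f : ℂ → Fin N → ℂ) (z : ℂ) : Fin N → ℂ :=
  fun i => wD (fun w => f w i) z

/-- Componentwise anti-Wirtinger derivative for vector-valued maps. -/
noncomputable def wDbarV {N : ℕ} (f : ℂ → Fin N → ℂ) (z : ℂ) : Fin N → ℂ :=
  fun i => wDbar (fun w => f w i) z

/-- Hermitian inner product a†·b = Σᵢ āᵢ bᵢ on ℂ^N. -/
noncomputable def herm {N : ℕ} (a b : Fin N → ℂ) : ℂ :=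
  ∑ i, (starRingEnd ℂ) (a i) * b i

/-- Squared norm |a|² as a real number. -/
noncomputable def nsq {N : ℕ} (a : Fin N → ℂ) : ℝ :=
  ∑ i, Complex.normSq (a i)

/-- The operator P₊ g = ∂g − g (g†·∂g)/|g|². -/
noncomputable def Pp {N : ℕ} (g : ℂ → Fin N → ℂ) : ℂ → Fin N → ℂ :=
  fun z i => wDV g z i - g z i * (herm (g z) (wDV g z) / herm (g z) (g z))

/-- Iterates of P₊ : P₊⁰ g = g, P₊^{k+1} g = P₊ (P₊^k g). -/
noncomputable def PpIter {N : ℕ} (g : ℂ → Fin N → ℂ) : ℕ → (ℂ → Fin N → ℂ)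
  | 0 => g
  | k + 1 => Pp (PpIter g k)

/-- The projector P(V) = V ⊗ V† / |V|². -/
noncomputable def proj {N : ℕ} (V : ℂ → Fin N → ℂ) (z : ℂ) : Matrix (Fin N) (Fin N) ℂ :=
  fun i j => V z i * (starRingEnd ℂ) (V z j) / herm (V z) (V z)

/-- Entrywise Wirtinger derivative for matrix-valued maps. -/
noncomputable def wDM {N : ℕ} (M : ℂ → Matrix (Fin N) (Fin N) ℂ) (z : ℂ) :
    Matrix (Fin N) (Fin N) ℂ :=
  fun i j => wD (fun w => M w i j) z

/-- Entrywise anti-Wirtinger derivative for matrix-valued maps. -/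
noncomputable def wDbarM {N : ℕ} (M : ℂ → Matrix (Fin N) (Fin N) ℂ) (z : ℂ) :
    Matrix (Fin N) (Fin N) ℂ :=
  fun i j => wDbar (fun w => M w i j) z

lemma fderiv_real_holo {g : ℂ → ℂ} {z : ℂ} (hg : DifferentiableAt ℂ g z) (v : ℂ) :
    fderiv ℝ g z v = deriv g z * v := by
  rw [(hg.hasFDerivAt.restrictScalars ℝ).fderiv]
  simp only [ContinuousLinearMap.coe_restrictScalars']
  have h1 : fderiv ℂ g z v = v • fderiv ℂ g z 1 := by
    rw [← ContinuousLinearMap.map_smul, smul_eq_mul, mul_one]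
  rw [h1, fderiv_apply_one_eq_deriv, smul_eq_mul, mul_comm]

lemma wD_holo {g : ℂ → ℂ} {z : ℂ} (hg : DifferentiableAt ℂ g z) :
    wD g z = deriv g z := by
  simp only [wD, fderiv_real_holo hg]
  linear_combination (-(deriv g z)/2) * Complex.I_mul_I

lemma wDbar_holo {g : ℂ → ℂ} {z : ℂ} (hg : DifferentiableAt ℂ g z) :
    wDbar g z = 0 := by
  simp only [wDbar, fderiv_real_holo hg]
  linear_combination ((deriv g z)/2) * Complex.I_mul_I

lemma fderiv_conj {g : ℂ → ℂ} {z : ℂ} (hg : DifferentiableAt ℝ g z) (v : ℂ) :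
    fderiv ℝ (fun w => (starRingEnd ℂ) (g w)) z v = (starRingEnd ℂ) (fderiv ℝ g z v) := by
  have h1 : (fun w => (starRingEnd ℂ) (g w)) = fun w => star (g w) := rfl
  rw [h1, fderiv_star]
  rfl

lemma diffR_conj {g : ℂ → ℂ} {z : ℂ} (hg : DifferentiableAt ℝ g z) :
    DifferentiableAt ℝ (fun w => (starRingEnd ℂ) (g w)) z := hg.star

lemma wD_conj {g : ℂ → ℂ} {z : ℂ} (hg : DifferentiableAt ℝ g z) :
    wD (fun w => (starRingEnd ℂ) (g w)) z = (starRingEnd ℂ) (wDbar g z) := by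
  simp only [wD, wDbar, fderiv_conj hg, map_add, _root_.map_mul, map_div₀, Complex.conj_I, map_ofNat]
  push_cast
  ring

lemma wDbar_conj {g : ℂ → ℂ} {z : ℂ} (hg : DifferentiableAt ℝ g z) :
    wDbar (fun w => (starRingEnd ℂ) (g w)) z = (starRingEnd ℂ) (wD g z) := by
  simp only [wD, wDbar, fderiv_conj hg, map_sub, _root_.map_mul, map_div₀, Complex.conj_I, map_ofNat]
  push_cast
  ring

lemma wD_mul {g h : ℂ → ℂ} {z : ℂ} (hg : DifferentiableAt ℝ g z) (hh : DifferentiableAt ℝ h z) :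
    wD (fun w => g w * h w) z = wD g z * h z + g z * wD h z := by
  simp only [wD, fderiv_fun_mul hg hh, ContinuousLinearMap.add_apply,
    ContinuousLinearMap.smul_apply, smul_eq_mul]
  ring

lemma wDbar_mul {g h : ℂ → ℂ} {z : ℂ} (hg : DifferentiableAt ℝ g z) (hh : DifferentiableAt ℝ h z) :
    wDbar (fun w => g w * h w) z = wDbar g z * h z + g z * wDbar h z := by
  simp only [wDbar, fderiv_fun_mul hg hh, ContinuousLinearMap.add_apply,
    ContinuousLinearMap.smul_apply, smul_eq_mul]
  ring

lemma wD_sum {N : ℕ} {g : Fin N → ℂ → ℂ} {z : ℂ}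
    (hg : ∀ i, DifferentiableAt ℝ (g i) z) :
    wD (fun w => ∑ i, g i w) z = ∑ i, wD (g i) z := by
  simp only [wD]
  rw [fderiv_fun_sum (fun i _ => hg i)]
  simp only [ContinuousLinearMap.coe_sum', Finset.sum_apply]
  rw [Finset.mul_sum, ← Finset.sum_sub_distrib, ← Finset.sum_div]

lemma wDbar_sum {N : ℕ} {g : Fin N → ℂ → ℂ} {z : ℂ}
    (hg : ∀ i, DifferentiableAt ℝ (g i) z) :
    wDbar (fun w => ∑ i, g i w) z = ∑ i, wDbar (g i) z := by
  simp only [wDbar]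
  rw [fderiv_fun_sum (fun i _ => hg i)]
  simp only [ContinuousLinearMap.coe_sum', Finset.sum_apply]
  rw [Finset.mul_sum, ← Finset.sum_add_distrib, ← Finset.sum_div]

lemma wD_comp_holo {g h : ℂ → ℂ} {z : ℂ} (hg : DifferentiableAt ℂ g (h z))
    (hh : DifferentiableAt ℝ h z) :
    wD (fun w => g (h w)) z = deriv g (h z) * wD h z := by
  have key : ∀ v, fderiv ℝ (fun w => g (h w)) z v = deriv g (h z) * fderiv ℝ h z v := by
    intro v
    have := fderiv_comp (x := z) (hg.restrictScalars ℝ) hh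
    rw [show (fun w => g (h w)) = g ∘ h from rfl, this, ContinuousLinearMap.comp_apply,
      fderiv_real_holo hg]
  simp only [wD, key]
  ring

lemma wDbar_comp_holo {g h : ℂ → ℂ} {z : ℂ} (hg : DifferentiableAt ℂ g (h z))
    (hh : DifferentiableAt ℝ h z) :
    wDbar (fun w => g (h w)) z = deriv g (h z) * wDbar h z := by
  have key : ∀ v, fderiv ℝ (fun w => g (h w)) z v = deriv g (h z) * fderiv ℝ h z v := by
    intro v
    have := fderiv_comp (x := z) (hg.restrictScalars ℝ) hh
    rw [show (fun w => g (h w)) = g ∘ h from rfl, this, ContinuousLinearMap.comp_apply,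
      fderiv_real_holo hg]
  simp only [wDbar, key]
  ring


lemma herm_expand {N : ℕ} (a b : Fin N → ℂ) (c : ℂ) :
    herm (fun i => a i - b i * c) (fun i => a i - b i * c)
      = herm a a - c * herm a b - (starRingEnd ℂ) c * herm b a
        + (starRingEnd ℂ) c * c * herm b b := by
  simp only [herm, map_sub, _root_.map_mul]
  rw [Finset.mul_sum, Finset.mul_sum, Finset.mul_sum, ← Finset.sum_sub_distrib,
    ← Finset.sum_sub_distrib, ← Finset.sum_add_distrib]
  exact Finset.sum_congr rfl fun i _ => by ring

lemma herm_conj {N : ℕ} (a b : Fin N → ℂ) :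
    (starRingEnd ℂ) (herm a b) = herm b a := by
  simp only [herm, map_sum, _root_.map_mul, Complex.conj_conj]
  exact Finset.sum_congr rfl fun i _ => by ring

lemma nsq_cast {N : ℕ} (a : Fin N → ℂ) : ((nsq a : ℝ) : ℂ) = herm a a := by
  simp only [nsq, herm, Complex.ofReal_sum]
  exact Finset.sum_congr rfl fun i _ => Complex.normSq_eq_conj_mul_self

/-- For holomorphic nowhere-vanishing `f`, `∂∂̄ ln |f|² = |P₊f|²/|f|²`. -/
theorem stmt_6 {N : ℕ} (f : ℂ → Fin N → ℂ)
    (hf : ∀ i, Differentiable ℂ fun z => f z i)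
    (hf0 : ∀ z, f z ≠ 0) :
    ∀ ζ : ℂ,
      wD (fun w => wDbar (fun u => (Real.log (nsq (f u)) : ℂ)) w) ζ =
        ((nsq (Pp f ζ) / nsq (f ζ) : ℝ) : ℂ) := by
  intro ζ
  classical
  set F' : Fin N → ℂ → ℂ := fun i => deriv (fun z => f z i) with hF'def
  have hholoF' : ∀ i, Differentiable ℂ (F' i) := by
    intro i
    have hA : AnalyticOnNhd ℂ (fun z => f z i) Set.univ := fun z _ => (hf i).analyticAt z
    exact fun z => (hA.deriv z (Set.mem_univ z)).differentiableAt
  set h : ℂ → ℂ := fun w => herm (f w) (f w) with hhdef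
  set A : ℂ → ℂ := fun w => herm (fun i => F' i w) (f w) with hAdef
  have hdF : ∀ i w, DifferentiableAt ℝ (fun z => f z i) w :=
    fun i w => ((hf i) w).restrictScalars ℝ
  have hdF' : ∀ i w, DifferentiableAt ℝ (F' i) w :=
    fun i w => ((hholoF' i) w).restrictScalars ℝ
  have hdh : ∀ w, DifferentiableAt ℝ h w := by
    intro w
    exact DifferentiableAt.fun_sum fun i _ => (diffR_conj (hdF i w)).mul (hdF i w)
  have hdA : ∀ w, DifferentiableAt ℝ A w := by
    intro w
    exact DifferentiableAt.fun_sum fun i _ => (diffR_conj (hdF' i w)).mul (hdF i w)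
  have hpos : ∀ w, 0 < nsq (f w) := by
    intro w
    obtain ⟨i, hi⟩ : ∃ i, f w i ≠ 0 := by
      by_contra hcon; push_neg at hcon; exact hf0 w (funext hcon)
    exact lt_of_lt_of_le (Complex.normSq_pos.2 hi)
      (Finset.single_le_sum (f := fun j => Complex.normSq (f w j))
        (fun j _ => Complex.normSq_nonneg _) (Finset.mem_univ i))
  have hhr : ∀ w, h w = ((nsq (f w) : ℝ) : ℂ) := fun w => (nsq_cast (f w)).symm
  have hh0 : ∀ w, h w ≠ 0 := by
    intro w; rw [hhr w]
    exact_mod_cast (hpos w).ne'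
  have hslit : ∀ w, h w ∈ Complex.slitPlane := by
    intro w; rw [hhr w]
    exact Complex.ofReal_mem_slitPlane.2 (hpos w)
  have hwDbarh : ∀ w, wDbar h w = A w := by
    intro w
    have e1 : wDbar h w = ∑ i, wDbar (fun u => (starRingEnd ℂ) (f u i) * f u i) w := by
      exact wDbar_sum fun i => (diffR_conj (hdF i w)).mul (hdF i w)
    rw [e1, hAdef]
    simp only [herm]
    refine Finset.sum_congr rfl fun i _ => ?_
    rw [wDbar_mul (diffR_conj (hdF i w)) (hdF i w), wDbar_conj (hdF i w),
      wD_holo ((hf i) w), wDbar_holo ((hf i) w)]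
    ring
  have hwDh : ∀ w, wD h w = herm (f w) (fun i => F' i w) := by
    intro w
    have e1 : wD h w = ∑ i, wD (fun u => (starRingEnd ℂ) (f u i) * f u i) w := by
      exact wD_sum fun i => (diffR_conj (hdF i w)).mul (hdF i w)
    rw [e1]
    simp only [herm]
    refine Finset.sum_congr rfl fun i _ => ?_
    rw [wD_mul (diffR_conj (hdF i w)) (hdF i w), wD_conj (hdF i w),
      wDbar_holo ((hf i) w), wD_holo ((hf i) w), map_zero]
    ring
  have hwDA : wD A ζ = herm (fun i => F' i ζ) (fun i => F' i ζ) := by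
    have e1 : wD A ζ = ∑ i, wD (fun u => (starRingEnd ℂ) (F' i u) * f u i) ζ := by
      exact wD_sum fun i => (diffR_conj (hdF' i ζ)).mul (hdF i ζ)
    rw [e1]
    simp only [herm]
    refine Finset.sum_congr rfl fun i _ => ?_
    rw [wD_mul (diffR_conj (hdF' i ζ)) (hdF i ζ), wD_conj (hdF' i ζ),
      wDbar_holo ((hholoF' i) ζ), wD_holo ((hf i) ζ), map_zero]
    ring
  have step1 : (fun w => wDbar (fun u => ((Real.log (nsq (f u)) : ℝ) : ℂ)) w)
      = fun w => A w / h w := by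
    funext w
    have hrw : (fun u => ((Real.log (nsq (f u)) : ℝ) : ℂ)) = fun u => Complex.log (h u) := by
      funext u
      rw [Complex.ofReal_log (hpos u).le, hhr u]
    rw [hrw, wDbar_comp_holo (Complex.differentiableAt_log (hslit w)) (hdh w),
      (Complex.hasDerivAt_log (hslit w)).deriv, hwDbarh w]
    rw [inv_mul_eq_div]
  rw [step1]
  have hinvdiff : DifferentiableAt ℝ (fun w => (h w)⁻¹) ζ :=
    ((differentiableAt_inv (𝕜 := ℂ) (hh0 ζ)).restrictScalars ℝ).comp ζ (hdh ζ)
  have hdiv : (fun w => A w / h w) = fun w => A w * (h w)⁻¹ := by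
    funext w; rw [div_eq_mul_inv]
  have hinv : wD (fun w => (h w)⁻¹) ζ = -((h ζ) ^ 2)⁻¹ * wD h ζ := by
    have := wD_comp_holo (g := Inv.inv) (h := h) (z := ζ)
      (differentiableAt_inv (𝕜 := ℂ) (hh0 ζ)) (hdh ζ)
    rw [deriv_inv] at this
    exact this
  rw [hdiv, wD_mul (hdA ζ) hinvdiff, hinv, hwDA, hwDh]
  set B := herm (fun i => F' i ζ) (fun i => F' i ζ) with hB
  set C := herm (f ζ) (fun i => F' i ζ) with hC
  have hwDV : wDV f ζ = fun i => F' i ζ := by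
    funext i; exact wD_holo ((hf i) ζ)
  have hPp : Pp f ζ = fun i => F' i ζ - f ζ i * (C / h ζ) := by
    funext i
    simp only [Pp, hwDV]
    rfl
  rw [hPp]
  have hrhs : ((nsq (fun i => F' i ζ - f ζ i * (C / h ζ)) / nsq (f ζ) : ℝ) : ℂ)
      = herm (fun i => F' i ζ - f ζ i * (C / h ζ))
          (fun i => F' i ζ - f ζ i * (C / h ζ)) / h ζ := by
    rw [Complex.ofReal_div, nsq_cast, hhr ζ]
  rw [hrhs, herm_expand]
  have hconjc : (starRingEnd ℂ) (C / h ζ) = A ζ / h ζ := by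
    rw [map_div₀, hC, herm_conj]
    congr 1
    rw [hhr ζ, Complex.conj_ofReal]
  rw [hconjc]
  have hAζ : herm (fun i => F' i ζ) (f ζ) = A ζ := rfl
  have hhζ : herm (f ζ) (f ζ) = h ζ := rfl
  rw [hAζ, hhζ]
  have h0 := hh0 ζ
  field_simp
  ring
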